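/- arXiv:1204.3417 — 5 statements merged into one kernel-verified Lean document; each statement's English description precedes it below -/
import Mathlib

section
/- Let E be a normed space over a non-Archimedean valued field whose norm satisfies the ultrametric inequality, and let W be a subspace of E that is spherically complete (as a metric space). Then for every v ∈ E, the distance from v to W is attained: there exists w₀ ∈ W with ‖v - w₀‖ = inf_{w ∈ W} ‖v - w‖. -/
/-!
Balls of `W` centred at `w` of radius `‖v - w‖` form a chain: in an ultrametric space the ball
around `w₁` of radius `‖v - w₁‖` contains `w₂` whenever `‖v - w₂‖ ≤ ‖v - w₁‖`, and a closed ball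
is centred at each of its points. By spherical completeness some `w₀ ∈ W` lies in all of them,
and then `‖v - w₀‖ ≤ max ‖v - w‖ ‖w - w₀‖ ≤ ‖v - w‖` for every `w ∈ W`.
-/

/-- A metric space is spherically complete if every nonempty chain of closed
balls has nonempty intersection. -/
def SphericallyComplete (X : Type*) [MetricSpace X] : Prop :=
  ∀ (ι : Type) (_ : Nonempty ι) (c : ι → X) (r : ι → ℝ), (∀ i, 0 ≤ r i) →
    (∀ i j, Metric.closedBall (c i) (r i) ⊆ Metric.closedBall (c j) (r j) ∨
      Metric.closedBall (c j) (r j) ⊆ Metric.closedBall (c i) (r i)) →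
    (⋂ i, Metric.closedBall (c i) (r i)).Nonempty

open Metric

namespace IsUltrametricDist

variable {X : Type*}

theorem closedBall_dist_subset_closedBall_dist [PseudoMetricSpace X] [IsUltrametricDist X]
    {v a b : X} (h : dist v a ≤ dist v b) :
    closedBall a (dist v a) ⊆ closedBall b (dist v b) := by
  have ha : a ∈ closedBall b (dist v b) :=
    (dist_triangle_max a v b).trans (max_le (dist_comm a v ▸ h) le_rfl)
  rw [closedBall_eq_of_mem ha]
  exact closedBall_subset_closedBall h

theorem exists_forall_dist_le_of_sphericallyComplete [MetricSpace X] [IsUltrametricDist X]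
    {S : Set X} (hS : SphericallyComplete S) (hne : S.Nonempty) (v : X) :
    ∃ s : S, ∀ t : S, dist v s ≤ dist v t := by
  let radius : S → ℝ := fun s => dist v s
  -- Index the chain by radii, which lie in `Type`; equal radii give equal balls.
  let center : Set.range radius → S := fun r => r.2.choose
  have radius_center (r : Set.range radius) : radius (center r) = r := r.2.choose_spec
  obtain ⟨s, hs⟩ := hS (Set.range radius) (hne.to_subtype.map fun s => ⟨radius s, s, rfl⟩)
    center (fun r => radius (center r)) (fun _ => dist_nonneg) fun r r' =>
      (le_total (radius (center r)) (radius (center r'))).imp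
        (fun h _ hx => closedBall_dist_subset_closedBall_dist h hx)
        (fun h _ hx => closedBall_dist_subset_closedBall_dist h hx)
  refine ⟨s, fun t => ?_⟩
  let c := center ⟨radius t, t, rfl⟩
  have hc : radius c = radius t := radius_center _
  have hsc : dist (s : X) c ≤ radius c := Set.mem_iInter.1 hs _
  calc dist v s ≤ max (dist v c) (dist (c : X) s) := dist_triangle_max _ _ _
    _ ≤ dist v t := max_le hc.le (dist_comm (c : X) s ▸ hsc.trans hc.le)

end IsUltrametricDist

theorem dist_to_spherically_complete_subspace_attained_general
    {k : Type*} [NormedField k]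
    {E : Type*} [NormedAddCommGroup E] [NormedSpace k E] [IsUltrametricDist E]
    (W : Submodule k E) (hW : SphericallyComplete W)
    (v : E) :
    ∃ w₀ ∈ W, ‖v - w₀‖ = ⨅ w : W, ‖v - (w : E)‖ := by
  obtain ⟨w₀, hw₀⟩ := IsUltrametricDist.exists_forall_dist_le_of_sphericallyComplete
    (S := (W : Set E)) hW ⟨0, W.zero_mem⟩ v
  refine ⟨w₀, w₀.2, le_antisymm ?_ ?_⟩
  · exact le_ciInf fun w => by simpa only [dist_eq_norm] using hw₀ w
  · exact ciInf_le ⟨0, Set.forall_mem_range.2 fun _ => norm_nonneg _⟩ w₀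

/-- If `W` is a spherically complete subspace of an ultrametric
normed space `E`, then for every `v ∈ E` the distance from `v` to `W` is
attained. -/
theorem dist_to_spherically_complete_subspace_attained
    {k : Type*} [NormedField k] [IsUltrametricDist k]
    {E : Type*} [NormedAddCommGroup E] [NormedSpace k E] [IsUltrametricDist E]
    (W : Submodule k E) (hW : SphericallyComplete W)
    (v : E) :
    ∃ w₀ ∈ W, ‖v - w₀‖ = ⨅ w : W, ‖v - (w : E)‖ :=
  dist_to_spherically_complete_subspace_attained_general W hW v
end

section
/- Let k be a spherically complete non-Archimedean valued field. Then every finite-dimensional normed vector space over k (with a norm satisfying the ultrametric inequality and ‖c·x‖ = |c|·‖x‖) is spherically complete. -/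
/-!
Induct on the dimension, writing `E = D ⊕ k e` with `D` a hyperplane, spherically complete by
induction. Spherical completeness of `D` yields a best approximation `x₀ ∈ D` of `e`; after
replacing `e` by `e - x₀` the decomposition is orthogonal:
`‖d + t • e‖ = max ‖d‖ (‖t‖ * ‖e‖)`. A chain of balls in `E` then projects to chains of balls
in `D` and in `k`, and points in the intersections of these two chains assemble to a point in
the intersection of the original one.
-/

open Metric Module
open IsUltrametricDist (closedBall_eq_of_mem norm_add_le_max)

section MetricSpace

variable {X : Type*} [MetricSpace X]

theorem SphericallyComplete.of_forall_exists_dist_le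
    (h : ∀ (ι : Type) [Nonempty ι] (c : ι → X) (r : ι → ℝ), (∀ i, 0 ≤ r i) →
      (∀ i j, dist (c i) (c j) ≤ max (r i) (r j)) → ∃ x, ∀ i, dist x (c i) ≤ r i) :
    SphericallyComplete X := by
  intro ι _ c r hr hchain
  obtain ⟨x, hx⟩ := h ι c r hr fun i j => by
    rcases hchain i j with hij | hji
    · exact (hij (mem_closedBall_self (hr i))).trans (le_max_right _ _)
    · exact dist_comm (c i) (c j) ▸ (hji (mem_closedBall_self (hr j))).trans (le_max_left _ _)
  exact ⟨x, Set.mem_iInter.2 hx⟩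

variable [IsUltrametricDist X]

theorem closedBall_subset_or_of_dist_le_max {x y : X} {r s : ℝ} (h : dist x y ≤ max r s) :
    closedBall x r ⊆ closedBall y s ∨ closedBall y s ⊆ closedBall x r := by
  rcases le_total r s with hrs | hsr
  · left
    rw [closedBall_eq_of_mem (mem_closedBall.2 (h.trans_eq (max_eq_right hrs)))]
    exact closedBall_subset_closedBall hrs
  · right
    rw [closedBall_eq_of_mem (mem_closedBall'.2 (h.trans_eq (max_eq_left hsr)))]
    exact closedBall_subset_closedBall hsr

theorem SphericallyComplete.exists_forall_dist_le (h : SphericallyComplete X) {ι : Type*}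
    [Nonempty ι] (c : ι → X) (r : ι → ℝ) (hr : ∀ i, 0 ≤ r i)
    (hc : ∀ i j, dist (c i) (c j) ≤ max (r i) (r j)) : ∃ x, ∀ i, dist x (c i) ≤ r i := by
  -- Two balls of such a chain with the same radius coincide, so the chain can be reindexed
  -- by its set of radii, which lives in `Type`.
  choose j hj using fun s : Set.range r => s.2
  obtain ⟨x, hx⟩ := h (Set.range r) (Set.range_nonempty r).to_subtype (c ∘ j) (r ∘ j)
    (fun _ => hr _) fun _ _ => closedBall_subset_or_of_dist_le_max (hc _ _)
  simp only [Set.mem_iInter, mem_closedBall, Function.comp_apply] at hx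
  refine ⟨x, fun i => ?_⟩
  set s : Set.range r := ⟨r i, i, rfl⟩
  calc dist x (c i) ≤ max (dist x (c (j s))) (dist (c (j s)) (c i)) := dist_triangle_max _ _ _
    _ ≤ r i :=
      max_le ((hx s).trans_eq (hj s)) ((hc _ _).trans_eq (by rw [hj s]; exact max_self _))

end MetricSpace

theorem SphericallyComplete.of_subsingleton {X : Type*} [MetricSpace X] [Subsingleton X] :
    SphericallyComplete X :=
  of_forall_exists_dist_le fun ι _ c r hr _ =>
    ⟨c (Classical.arbitrary ι), fun i => by simpa [Subsingleton.elim (c _) (c i)] using hr i⟩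

section NormedSpace

variable {k : Type*} [NormedField k] {E : Type*} [NormedAddCommGroup E] [NormedSpace k E]
  [IsUltrametricDist E]

theorem Submodule.exists_norm_sub_le_of_sphericallyComplete (D : Submodule k E)
    (hD : SphericallyComplete D) (e : E) : ∃ x₀ ∈ D, ∀ x ∈ D, ‖e - x₀‖ ≤ ‖e - x‖ := by
  obtain ⟨x₀, hx₀⟩ := hD.exists_forall_dist_le id (fun x : D => ‖e - x‖)
    (fun _ => norm_nonneg _) fun x y => by
      simpa [dist_eq_norm, norm_sub_rev (e : E)] using dist_triangle_max (x : E) e y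
  refine ⟨x₀, x₀.2, fun x hx => ?_⟩
  calc ‖e - x₀‖ = dist e x₀ := (dist_eq_norm _ _).symm
    _ ≤ max (dist e x) (dist x x₀) := dist_triangle_max _ _ _
    _ ≤ ‖e - x‖ := max_le (dist_eq_norm e x).le (dist_comm x (x₀ : E) ▸ hx₀ ⟨x, hx⟩)

theorem norm_add_smul_eq_max_of_forall_norm_le_norm_sub {D : Submodule k E} {e : E}
    (he : ∀ x ∈ D, ‖e‖ ≤ ‖e - x‖) {d : E} (hd : d ∈ D) (t : k) :
    ‖d + t • e‖ = max ‖d‖ (‖t‖ * ‖e‖) := by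
  have h_smul : ‖t‖ * ‖e‖ ≤ ‖d + t • e‖ := by
    rcases eq_or_ne t 0 with rfl | ht
    · simp
    have : d + t • e = t • (e - -t⁻¹ • d) := by
      rw [smul_sub, smul_smul, mul_neg, mul_inv_cancel₀ ht, neg_smul, one_smul, sub_neg_eq_add,
        add_comm]
    rw [this, norm_smul]
    exact mul_le_mul_of_nonneg_left (he _ (D.smul_mem _ hd)) (norm_nonneg t)
  have h_left : ‖d‖ ≤ ‖d + t • e‖ := by
    calc ‖d‖ = ‖(d + t • e) + -(t • e)‖ := by rw [add_neg_cancel_right]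
      _ ≤ max ‖d + t • e‖ ‖t • e‖ := by rw [← norm_neg (t • e)]; exact norm_add_le_max _ _
      _ ≤ ‖d + t • e‖ := max_le le_rfl (norm_smul t e ▸ h_smul)
  exact le_antisymm (norm_smul t e ▸ norm_add_le_max d (t • e)) (max_le h_left h_smul)

variable [IsUltrametricDist k]

theorem sphericallyComplete_of_sup_span_eq_top_of_forall_norm_le_norm_sub
    (hk : SphericallyComplete k) {D : Submodule k E} (hD : SphericallyComplete D) {e : E}
    (he₀ : e ≠ 0) (he : ∀ x ∈ D, ‖e‖ ≤ ‖e - x‖) (htop : D ⊔ k ∙ e = ⊤) :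
    SphericallyComplete E := by
  refine .of_forall_exists_dist_le fun ι _ c r hr hc => ?_
  have hdecomp : ∀ x : E, ∃ d : D, ∃ t : k, x = d + t • e := fun x => by
    have hx : x ∈ D ⊔ k ∙ e := htop ▸ Submodule.mem_top
    obtain ⟨d, hd, y, hy, hx⟩ := Submodule.mem_sup.1 hx
    obtain ⟨t, rfl⟩ := Submodule.mem_span_singleton.1 hy
    exact ⟨⟨d, hd⟩, t, hx.symm⟩
  choose d t hdt using fun i => hdecomp (c i)
  have hdist : ∀ (a b : D) (s u : k),
      dist ((a : E) + s • e) (b + u • e) = max (dist a b) (dist s u * ‖e‖) := fun a b s u => by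
    rw [dist_eq_norm, show (a : E) + s • e - (b + u • e) = (a - b : D) + (s - u) • e by
      rw [Submodule.coe_sub, sub_smul]; abel]
    rw [norm_add_smul_eq_max_of_forall_norm_le_norm_sub he (a - b).2, dist_eq_norm,
      dist_eq_norm]
    rfl
  have hc' : ∀ i j, max (dist (d i) (d j)) (dist (t i) (t j) * ‖e‖) ≤ max (r i) (r j) :=
    fun i j => by simpa only [hdt, hdist] using hc i j
  have he_pos : 0 < ‖e‖ := norm_pos_iff.2 he₀
  obtain ⟨y, hy⟩ := hD.exists_forall_dist_le d r hr fun i j => (le_max_left _ _).trans (hc' i j)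
  obtain ⟨τ, hτ⟩ := hk.exists_forall_dist_le t (fun i => r i / ‖e‖)
    (fun i => div_nonneg (hr i) he_pos.le) fun i j => by
      rw [max_div_div_right he_pos.le, le_div_iff₀ he_pos]
      exact (le_max_right _ _).trans (hc' i j)
  refine ⟨y + τ • e, fun i => ?_⟩
  rw [hdt i, hdist]
  exact max_le (hy i) ((le_div_iff₀ he_pos).1 (hτ i))

theorem sphericallyComplete_of_sup_span_eq_top (hk : SphericallyComplete k) {D : Submodule k E}
    (hD : SphericallyComplete D) {e : E} (he : e ∉ D) (htop : D ⊔ k ∙ e = ⊤) :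
    SphericallyComplete E := by
  -- Subtracting a best approximation from `D` makes `e` orthogonal to `D`.
  obtain ⟨x₀, hx₀, hmin⟩ := D.exists_norm_sub_le_of_sphericallyComplete hD e
  refine sphericallyComplete_of_sup_span_eq_top_of_forall_norm_le_norm_sub hk hD
    (e := e - x₀) (sub_ne_zero.2 fun h => he (h ▸ hx₀)) (fun x hx => ?_) ?_
  · simpa only [sub_sub] using hmin (x₀ + x) (D.add_mem hx₀ hx)
  · refine eq_top_iff.2 (htop ▸ sup_le le_sup_left ?_)
    rw [Submodule.span_singleton_le_iff_mem]
    simpa using Submodule.add_mem_sup hx₀ (Submodule.mem_span_singleton_self (e - x₀))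

end NormedSpace

/-- Every finite-dimensional ultrametric normed vector space over
a spherically complete non-Archimedean valued field is spherically complete. -/
theorem finiteDimensional_spherically_complete
    {k : Type*} [NormedField k] [IsUltrametricDist k]
    (hk : SphericallyComplete k)
    (E : Type*) [NormedAddCommGroup E] [NormedSpace k E] [IsUltrametricDist E]
    [FiniteDimensional k E] :
    SphericallyComplete E := by
  induction h : finrank k E generalizing E with
  | zero =>
    have := finrank_zero_iff.1 h
    exact .of_subsingleton
  | succ n ih =>
    obtain ⟨e, he⟩ := (finrank_pos_iff_exists_ne_zero (R := k) (M := E)).1 (by omega)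
    obtain ⟨D, hD⟩ := Submodule.exists_isCompl (k ∙ e)
    have hDn : finrank k D = n := by
      have := Submodule.finrank_add_eq_of_isCompl hD
      rw [finrank_span_singleton he] at this
      omega
    exact sphericallyComplete_of_sup_span_eq_top hk (ih D hDn)
      ((Submodule.disjoint_span_singleton' he).1 hD.symm.disjoint) hD.symm.sup_eq_top
end

section
/- Let k be a spherically complete non-Archimedean valued field and x a multiplicative non-Archimedean seminorm on k[T] extending |·| on k (write |P(x)| := x(P)). For every d ≥ 0 there exists a monic polynomial R₀ of degree d+1 such that |R₀(x)| = inf over all polynomials P of degree ≤ d of |(T^{d+1} - P)(x)|, i.e., the infimum of |R(x)| over monic R of degree d+1 is attained. -/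
open Polynomial NNReal

/-!
Let `x` be an ultrametric seminorm on a `k`-vector space. For a line `k ∙ v` and a vector `u`,
the function `G a = x (u - a • v)` satisfies `G b ≤ max (G a) (‖a - b‖ x v)` and
`‖a - b‖ x v ≤ max (G a) (G b)`. Hence the balls `B(a, G a / x v)` are totally ordered by
inclusion, and by spherical completeness a point in the intersection of those centred along a
minimizing sequence minimizes `G`. If every vector has a best approximation from a subspace `W`,
then the distance to `W` is again an ultrametric seminorm, so best approximations from
`W ⊔ k ∙ v` are found in two steps. By induction, best approximations exist from every
finitely generated subspace, in particular from the polynomials of degree `≤ d`.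
-/

lemma SphericallyComplete.exists_forall_le {X : Type*} [MetricSpace X] [IsUltrametricDist X]
    [Nonempty X] (hX : SphericallyComplete X)
    (G : X → ℝ≥0) {s : ℝ≥0} (hs : 0 < s)
    (h₁ : ∀ a b, G b ≤ max (G a) (nndist a b * s))
    (h₂ : ∀ a b, nndist a b * s ≤ max (G a) (G b)) :
    ∃ a₀, ∀ a, G a₀ ≤ G a := by
  have mem_ball : ∀ a b, a ∈ Metric.closedBall b (G b / s : ℝ≥0) ↔ nndist a b * s ≤ G b := by
    intro a b
    rw [Metric.mem_closedBall, dist_nndist, NNReal.coe_le_coe, le_div_iff₀ hs]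
  have ball_mono : ∀ a b, G a ≤ G b →
      Metric.closedBall a (G a / s : ℝ≥0) ⊆ Metric.closedBall b (G b / s : ℝ≥0) := by
    intro a b hab
    have hab' : a ∈ Metric.closedBall b (G b / s : ℝ≥0) :=
      (mem_ball a b).2 ((h₂ a b).trans (max_le hab le_rfl))
    rw [IsUltrametricDist.closedBall_eq_of_mem hab']
    exact Metric.closedBall_subset_closedBall (by gcongr)
  -- The chain is indexed by a minimizing sequence rather than by `X` itself, because
  -- `SphericallyComplete` only allows index types in `Type`.
  obtain ⟨g, -, hg_lim, hg_mem⟩ :=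
    exists_seq_tendsto_sInf (Set.range_nonempty G) (OrderBot.bddBelow _)
  choose c hc using hg_mem
  obtain ⟨a₀, ha₀⟩ := hX ℕ ⟨0⟩ c (fun n => (G (c n) / s : ℝ≥0)) (fun _ => NNReal.coe_nonneg _)
    (fun m n => (le_total (G (c m)) (G (c n))).imp (ball_mono _ _) (ball_mono _ _))
  have le_seq : ∀ n, G a₀ ≤ g n := by
    intro n
    have hn := (mem_ball _ _).1 (Set.mem_iInter.1 ha₀ n)
    rw [nndist_comm] at hn
    exact hc n ▸ (h₁ (c n) a₀).trans (max_le le_rfl hn)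
  exact ⟨a₀, fun a =>
    (ge_of_tendsto' hg_lim le_seq).trans (csInf_le (OrderBot.bddBelow _) ⟨a, rfl⟩)⟩

section Proximinal

structure IsUltrametricSeminorm (k : Type*) {V : Type*} [NormedField k] [AddCommGroup V]
    [Module k V] (x : V → ℝ≥0) : Prop where
  map_add_le_max : ∀ u v, x (u + v) ≤ max (x u) (x v)
  map_smul : ∀ (c : k) u, x (c • u) = ‖c‖₊ * x u

variable {k V : Type*} [NormedField k] [AddCommGroup V] [Module k V]

def IsProximinal (x : V → ℝ≥0) (W : Submodule k V) : Prop :=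
  ∀ u, ∃ w₀ ∈ W, ∀ w ∈ W, x (u - w₀) ≤ x (u - w)

noncomputable def distTo (x : V → ℝ≥0) (W : Submodule k V) (u : V) : ℝ≥0 :=
  ⨅ w : W, x (u - w)

namespace IsUltrametricSeminorm

variable {x : V → ℝ≥0}

lemma map_neg (hx : IsUltrametricSeminorm k x) (u : V) : x (-u) = x u := by
  simpa using hx.map_smul (-1 : k) u

lemma map_sub_le_max (hx : IsUltrametricSeminorm k x) (u v : V) :
    x (u - v) ≤ max (x u) (x v) := by
  simpa [sub_eq_add_neg, hx.map_neg] using hx.map_add_le_max u (-v)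

end IsUltrametricSeminorm

variable {x : V → ℝ≥0} {W : Submodule k V}

lemma distTo_le {u w : V} (hw : w ∈ W) : distTo x W u ≤ x (u - w) :=
  ciInf_le (OrderBot.bddBelow _) (⟨w, hw⟩ : W)

lemma IsProximinal.exists_eq_distTo (hW : IsProximinal x W) (u : V) :
    ∃ w₀ ∈ W, x (u - w₀) = distTo x W u := by
  obtain ⟨w₀, hw₀, hmin⟩ := hW u
  exact ⟨w₀, hw₀, le_antisymm (le_ciInf fun w => hmin w w.2) (distTo_le hw₀)⟩

lemma IsProximinal.isUltrametricSeminorm_distTo (hW : IsProximinal x W)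
    (hx : IsUltrametricSeminorm k x) :
    IsUltrametricSeminorm k (distTo x W) := by
  choose w hw hw_eq using hW.exists_eq_distTo
  have smul_le : ∀ (c : k) u, distTo x W (c • u) ≤ ‖c‖₊ * distTo x W u := by
    intro c u
    calc distTo x W (c • u) ≤ x (c • u - c • w u) := distTo_le (W.smul_mem c (hw u))
      _ = ‖c‖₊ * distTo x W u := by rw [← smul_sub, hx.map_smul, hw_eq]
  refine ⟨fun u v => ?_, fun c u => ?_⟩
  · calc distTo x W (u + v) ≤ x (u + v - (w u + w v)) := distTo_le (W.add_mem (hw u) (hw v))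
      _ = x ((u - w u) + (v - w v)) := by rw [add_sub_add_comm]
      _ ≤ max (distTo x W u) (distTo x W v) := hw_eq u ▸ hw_eq v ▸ hx.map_add_le_max _ _
  · rcases eq_or_ne c 0 with rfl | hc
    · simpa using smul_le 0 u
    refine le_antisymm (smul_le c u) ?_
    calc ‖c‖₊ * distTo x W u = ‖c‖₊ * distTo x W (c⁻¹ • c • u) := by rw [inv_smul_smul₀ hc]
      _ ≤ ‖c‖₊ * (‖c⁻¹‖₊ * distTo x W (c • u)) := by gcongr; exact smul_le _ _
      _ = distTo x W (c • u) := by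
        rw [nnnorm_inv, ← mul_assoc, mul_inv_cancel₀ (by simpa), one_mul]

lemma IsProximinal.sup (hW : IsProximinal x W) {W' : Submodule k V}
    (hW' : IsProximinal (distTo x W) W') : IsProximinal x (W ⊔ W') := by
  intro u
  obtain ⟨w₁, hw₁, hmin₁⟩ := hW' u
  obtain ⟨w₂, hw₂, hw₂_eq⟩ := hW.exists_eq_distTo (u - w₁)
  refine ⟨w₂ + w₁, Submodule.add_mem_sup hw₂ hw₁, fun w hw => ?_⟩
  obtain ⟨a, ha, b, hb, rfl⟩ := Submodule.mem_sup.1 hw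
  calc x (u - (w₂ + w₁)) = distTo x W (u - w₁) := by rw [add_comm, ← sub_sub, hw₂_eq]
    _ ≤ distTo x W (u - b) := hmin₁ b hb
    _ ≤ x (u - b - a) := distTo_le ha
    _ = x (u - (a + b)) := by rw [sub_sub, add_comm]

lemma isProximinal_span_singleton [IsUltrametricDist k] (hk : SphericallyComplete k)
    (hx : IsUltrametricSeminorm k x) (v : V) : IsProximinal x (k ∙ v) := by
  intro u
  set G : k → ℝ≥0 := fun a => x (u - a • v)
  have h₁ : ∀ a b, G b ≤ max (G a) (nndist a b * x v) := by
    intro a b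
    calc G b = x ((u - a • v) + (a - b) • v) := by rw [sub_smul, sub_add_sub_cancel]
      _ ≤ max (G a) (nndist a b * x v) :=
          (hx.map_add_le_max _ _).trans_eq (by rw [hx.map_smul, nndist_eq_nnnorm])
  have h₂ : ∀ a b, nndist a b * x v ≤ max (G a) (G b) := by
    intro a b
    calc nndist a b * x v = x ((u - b • v) - (u - a • v)) := by
          rw [sub_sub_sub_cancel_left, ← sub_smul, hx.map_smul, nndist_eq_nnnorm]
      _ ≤ max (G a) (G b) := (hx.map_sub_le_max _ _).trans_eq (max_comm _ _)
  obtain ⟨a₀, ha₀⟩ : ∃ a₀, ∀ a, G a₀ ≤ G a := by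
    rcases (zero_le : 0 ≤ x v).eq_or_lt with hv | hv
    · exact ⟨0, fun a => by simpa [← hv] using h₁ a 0⟩
    · exact hk.exists_forall_le G hv h₁ h₂
  refine ⟨a₀ • v, Submodule.smul_mem _ _ (Submodule.mem_span_singleton_self v), fun w hw => ?_⟩
  obtain ⟨a, rfl⟩ := Submodule.mem_span_singleton.1 hw
  exact ha₀ a

lemma Submodule.FG.isProximinal [IsUltrametricDist k] (hk : SphericallyComplete k) (hW : W.FG)
    (hx : IsUltrametricSeminorm k x) : IsProximinal x W := by
  induction W, hW using Submodule.fg_induction generalizing x with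
  | singleton v => exact isProximinal_span_singleton hk hx v
  | sup W₁ W₂ _ _ ih₁ ih₂ =>
    have hW₁ := ih₁ hx
    exact hW₁.sup (ih₂ (hW₁.isUltrametricSeminorm_distTo hx))

end Proximinal

/-- Over a spherically complete non-Archimedean valued field `k`,
for every multiplicative non-Archimedean seminorm `x` on `k[T]` extending the
absolute value of `k` and every `d ≥ 0`, the infimum of `x R` over monic `R`
of degree `d + 1` (i.e. `R = T^(d+1) - P` with `deg P ≤ d`) is attained. -/
theorem exists_minimal_monic
    {k : Type*} [NormedField k] [IsUltrametricDist k]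
    (hk : SphericallyComplete k)
    (x : Polynomial k → ℝ≥0)
    (hmul : ∀ P Q : Polynomial k, x (P * Q) = x P * x Q)
    (hultra : ∀ P Q : Polynomial k, x (P + Q) ≤ max (x P) (x Q))
    (hext : ∀ c : k, x (Polynomial.C c) = ‖c‖₊)
    (d : ℕ) :
    ∃ P₀ : Polynomial k, P₀.degree ≤ d ∧
      ∀ P : Polynomial k, P.degree ≤ d →
        x (X ^ (d + 1) - P₀) ≤ x (X ^ (d + 1) - P) := by
  classical
  have hx : IsUltrametricSeminorm k x :=
    ⟨hultra, fun c P => by rw [smul_eq_C_mul, hmul, hext]⟩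
  have hfg : (degreeLE k d).FG := ⟨_, degreeLE_eq_span_X_pow.symm⟩
  obtain ⟨P₀, hP₀, hmin⟩ := hfg.isProximinal hk hx (X ^ (d + 1))
  exact ⟨P₀, mem_degreeLE.1 hP₀, fun P hP => hmin P (mem_degreeLE.2 hP)⟩
end

section
/- Let x be a multiplicative non-Archimedean seminorm on k[T] extending |·| on k, with k spherically complete. For every d ≥ 0 there exist a monic polynomial R₀ of degree d+1 and r = |R₀(x)| ≥ 0 such that: (a) r ≤ |R(x)| for every monic R of degree d+1, and (b) defining y : k[T] → ℝ≥0 on monic degree-(d+1) polynomials by y(R) = max(r, |(R - R₀)(x)|), one has y(R) = |R(x)| for all monic R of degree d+1. In particular, the values |R(x)| for all monic R of degree d+1 are determined by r together with the restriction of x to polynomials of degree ≤ d. -/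
open Polynomial NNReal

theorem SphericallyComplete.exists_forall_nndist_le {X : Type*} [MetricSpace X]
    [IsUltrametricDist X] (hX : SphericallyComplete X) {ι : Type*} [Nonempty ι] (c : ι → X)
    (r : ι → ℝ≥0) (hc : ∀ i j, nndist (c i) (c j) ≤ max (r i) (r j)) :
    ∃ a, ∀ i, nndist a (c i) ≤ r i := by
  have hsub : ∀ i j, r i ≤ r j →
      Metric.closedBall (c i) (r i) ⊆ Metric.closedBall (c j) (r j) := by
    intro i j hij
    have hmem : c i ∈ Metric.closedBall (c j) (r j) := by
      rw [Metric.mem_closedBall, ← coe_nndist, NNReal.coe_le_coe]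
      exact (hc i j).trans (max_le hij le_rfl)
    rw [IsUltrametricDist.closedBall_eq_of_mem hmem]
    exact Metric.closedBall_subset_closedBall (NNReal.coe_le_coe.2 hij)
  -- `ι` may live in any universe, so index the chain by the radii: by `hc`, balls of equal
  -- radius coincide.
  choose i hi using fun ρ : Set.range r => ρ.2
  have : Nonempty (Set.range r) := (Set.range_nonempty r).to_subtype
  obtain ⟨a, ha⟩ := hX (Set.range r) this (fun ρ => c (i ρ)) (fun ρ => r (i ρ))
    (fun _ => NNReal.coe_nonneg _)
    (fun ρ σ => (le_total (r (i ρ)) (r (i σ))).imp (hsub _ _) (hsub _ _))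
  refine ⟨a, fun j => ?_⟩
  have hj := hsub _ j (hi ⟨r j, j, rfl⟩).le (Set.mem_iInter.1 ha ⟨r j, j, rfl⟩)
  rwa [Metric.mem_closedBall, ← coe_nndist, NNReal.coe_le_coe] at hj

theorem SphericallyComplete.exists_forall_nnnorm_sub_mul_le {k : Type*} [NormedField k]
    [IsUltrametricDist k] (hk : SphericallyComplete k) {ι : Type*} [Nonempty ι] (c : ι → k)
    (w : ℝ≥0) (r : ι → ℝ≥0) (hc : ∀ i j, ‖c i - c j‖₊ * w ≤ max (r i) (r j)) :
    ∃ a, ∀ i, ‖a - c i‖₊ * w ≤ r i := by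
  rcases eq_or_ne w 0 with rfl | hw
  · exact ⟨0, by simp⟩
  have hw := pos_iff_ne_zero.2 hw
  obtain ⟨a, ha⟩ := hk.exists_forall_nndist_le c (fun i => r i / w) fun i j => by
    rw [nndist_eq_nnnorm, le_max_iff, le_div_iff₀ hw, le_div_iff₀ hw, ← le_max_iff]
    exact hc i j
  exact ⟨a, fun i => by simpa [nndist_eq_nnnorm, le_div_iff₀ hw] using ha i⟩

namespace Polynomial

variable {k : Type*} [Field k]

theorem degree_sum_smul_lt {n : ℕ} {Q : ℕ → k[X]} (hQ : ∀ j < n, (Q j).degree ≤ j) (c : ℕ → k) :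
    (∑ j ∈ Finset.range n, c j • Q j).degree < n :=
  mem_degreeLT.1 <| Submodule.sum_mem _ fun j hj => Submodule.smul_mem _ _ <|
    mem_degreeLT.2 <| (hQ j (Finset.mem_range.1 hj)).trans_lt <|
      WithBot.coe_lt_coe.2 (Finset.mem_range.1 hj)

theorem exists_eq_sum_smul {n : ℕ} {Q : ℕ → k[X]} (hQ : ∀ j < n, (Q j).degree = j) {S : k[X]}
    (hS : S.degree < n) : ∃ c : ℕ → k, S = ∑ j ∈ Finset.range n, c j • Q j := by
  classical
  let seq : Sequence k := ⟨fun j => if j < n then Q j else X ^ j, fun j => by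
    split_ifs with hj
    exacts [hQ j hj, degree_X_pow j]⟩
  have hspan := seq.span_degreeLT (m := n) fun i _ =>
    isUnit_iff_ne_zero.2 (leadingCoeff_ne_zero.2 (seq.ne_zero i))
  obtain ⟨l, hl, rfl⟩ := (Finsupp.mem_span_image_iff_linearCombination k).1
    (hspan.ge (mem_degreeLT.2 hS))
  have hsupp : l.support ⊆ Finset.range n := by
    rw [← Finset.coe_subset, Finset.coe_range]; exact hl
  refine ⟨l, ?_⟩
  rw [Finsupp.linearCombination_apply, Finsupp.sum_of_support_subset l hsupp _ (by simp)]
  refine Finset.sum_congr rfl fun j hj => ?_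
  simp [seq, Finset.mem_range.1 hj]

theorem Monic.degree_sub_X_pow_lt {P : k[X]} (hP : P.Monic) {n : ℕ} (hn : P.degree = n) :
    (P - X ^ n).degree < (n : WithBot ℕ) := by
  simpa [hn] using degree_sub_lt_left (hn.trans (degree_X_pow n).symm) hP.ne_zero
    (by rw [hP.leadingCoeff, leadingCoeff_X_pow])

end Polynomial

-- The points of the Berkovich affine line over a non-Archimedean field `k`.
structure IsBerkovichPoint {k : Type*} [NormedField k] (x : k[X] → ℝ≥0) : Prop where
  map_mul : ∀ P Q : k[X], x (P * Q) = x P * x Q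
  isNonarchimedean : IsNonarchimedean x
  map_C : ∀ c : k, x (C c) = ‖c‖₊

structure IsMinimalMonic {R : Type*} [Semiring R] (x : R[X] → ℝ≥0) (n : ℕ) (Q : R[X]) :
    Prop where
  monic : Q.Monic
  degree_eq : Q.degree = n
  le : ∀ P : R[X], P.Monic → P.degree = n → x Q ≤ x P

namespace IsBerkovichPoint

variable {k : Type*} [NormedField k] {x : k[X] → ℝ≥0}

theorem map_smul (hx : IsBerkovichPoint x) (c : k) (P : k[X]) : x (c • P) = ‖c‖₊ * x P := by
  rw [smul_eq_C_mul, hx.map_mul, hx.map_C]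

theorem map_neg (hx : IsBerkovichPoint x) (P : k[X]) : x (-P) = x P := by
  simpa using hx.map_smul (-1) P

theorem map_sub_le_max (hx : IsBerkovichPoint x) (P Q : k[X]) :
    x (P - Q) ≤ max (x P) (x Q) := by
  simpa [sub_eq_add_neg, hx.map_neg] using hx.isNonarchimedean P (-Q)

end IsBerkovichPoint

namespace IsMinimalMonic

variable {k : Type*} [NormedField k] {x : k[X] → ℝ≥0} {n : ℕ} {Q : k[X]}

theorem map_add (hQ : IsMinimalMonic x n Q) (hx : IsBerkovichPoint x) {S : k[X]}
    (hS : S.degree < n) : x (Q + S) = max (x Q) (x S) := by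
  have hSQ : S.degree < Q.degree := hQ.degree_eq ▸ hS
  have hQ_le : x Q ≤ x (Q + S) :=
    hQ.le _ (hQ.monic.add_of_left hSQ) (by rw [degree_add_eq_left_of_degree_lt hSQ, hQ.degree_eq])
  refine le_antisymm (hx.isNonarchimedean Q S) (max_le hQ_le ?_)
  calc x S = x (Q + S - Q) := by rw [add_sub_cancel_left]
    _ ≤ max (x (Q + S)) (x Q) := hx.map_sub_le_max _ _
    _ = x (Q + S) := max_eq_left hQ_le

theorem map_smul_add (hQ : IsMinimalMonic x n Q) (hx : IsBerkovichPoint x) {S : k[X]}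
    (hS : S.degree < n) (c : k) :
    x (c • Q + S) = max (‖c‖₊ * x Q) (x S) := by
  rcases eq_or_ne c 0 with rfl | hc
  · simp
  have hS' : (c⁻¹ • S).degree < n := (degree_smul_le _ _).trans_lt hS
  calc x (c • Q + S) = x (c • (Q + c⁻¹ • S)) := by rw [smul_add, smul_inv_smul₀ hc]
    _ = max (‖c‖₊ * x Q) (x S) := by
      rw [hx.map_smul, hQ.map_add hx hS', hx.map_smul, mul_max, ← mul_assoc, ← nnnorm_mul,
        mul_inv_cancel₀ hc, nnnorm_one, one_mul]

end IsMinimalMonic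

namespace IsBerkovichPoint

variable {k : Type*} [NormedField k] {x : k[X] → ℝ≥0}

theorem map_sum_smul (hx : IsBerkovichPoint x) {n : ℕ} {Q : ℕ → k[X]}
    (hQ : ∀ j < n, IsMinimalMonic x j (Q j)) (c : ℕ → k) :
    x (∑ j ∈ Finset.range n, c j • Q j) = (Finset.range n).sup fun j => ‖c j‖₊ * x (Q j) := by
  induction n with
  | zero => simpa using hx.map_C 0
  | succ n ih =>
    have hlt : ∀ j < n, j < n + 1 := fun j hj => hj.trans n.lt_succ_self
    rw [Finset.sum_range_succ, add_comm, Finset.range_add_one, Finset.sup_insert,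
      (hQ n n.lt_succ_self).map_smul_add hx
        (degree_sum_smul_lt (fun j hj => (hQ j (hlt j hj)).degree_eq.le) c),
      ih fun j hj => hQ j (hlt j hj)]

theorem exists_forall_map_sub_le [IsUltrametricDist k] (hk : SphericallyComplete k)
    (hx : IsBerkovichPoint x) {n : ℕ} {Q : ℕ → k[X]} (hQ : ∀ j < n, IsMinimalMonic x j (Q j))
    {ι : Type*} [Nonempty ι] (P : ι → k[X]) (hP : ∀ i, (P i).degree < n) (ρ : ι → ℝ≥0)
    (hPρ : ∀ i i', x (P i - P i') ≤ max (ρ i) (ρ i')) :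
    ∃ R : k[X], R.degree < n ∧ ∀ i, x (R - P i) ≤ ρ i := by
  choose c hc using fun i => exists_eq_sum_smul (fun j hj => (hQ j hj).degree_eq) (hP i)
  have hsub : ∀ a b : ℕ → k, ∑ j ∈ Finset.range n, a j • Q j - ∑ j ∈ Finset.range n, b j • Q j =
      ∑ j ∈ Finset.range n, (a j - b j) • Q j := by
    simp [sub_smul, Finset.sum_sub_distrib]
  have hcenter : ∀ j, ∃ a : k, j < n → ∀ i, ‖a - c i j‖₊ * x (Q j) ≤ ρ i := by
    intro j
    by_cases hj : j < n
    · obtain ⟨a, ha⟩ := hk.exists_forall_nnnorm_sub_mul_le (fun i => c i j) (x (Q j)) ρ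
        fun i i' => calc
          ‖c i j - c i' j‖₊ * x (Q j)
              ≤ (Finset.range n).sup fun j => ‖c i j - c i' j‖₊ * x (Q j) :=
            Finset.le_sup (f := fun j => ‖c i j - c i' j‖₊ * x (Q j)) (Finset.mem_range.2 hj)
          _ = x (P i - P i') := by rw [hc i, hc i', hsub, hx.map_sum_smul hQ]
          _ ≤ max (ρ i) (ρ i') := hPρ i i'
      exact ⟨a, fun _ => ha⟩
    · exact ⟨0, fun h => absurd h hj⟩
  choose a ha using hcenter
  refine ⟨∑ j ∈ Finset.range n, a j • Q j,
    degree_sum_smul_lt (fun j hj => (hQ j hj).degree_eq.le) a, fun i => ?_⟩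
  rw [hc i, hsub, hx.map_sum_smul hQ]
  exact Finset.sup_le fun j hj => ha j (Finset.mem_range.1 hj) i

theorem exists_isMinimalMonic_of_forall_lt [IsUltrametricDist k] (hk : SphericallyComplete k)
    (hx : IsBerkovichPoint x) {n : ℕ} {Q : ℕ → k[X]} (hQ : ∀ j < n, IsMinimalMonic x j (Q j)) :
    ∃ R₀ : k[X], IsMinimalMonic x n R₀ := by
  let Monics := {P : k[X] // P.Monic ∧ P.degree = n}
  have : Nonempty Monics := ⟨⟨X ^ n, monic_X_pow n, degree_X_pow n⟩⟩
  obtain ⟨R, hRn, hR⟩ := hx.exists_forall_map_sub_le hk hQ (fun P : Monics => P.1 - X ^ n)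
    (fun P => P.2.1.degree_sub_X_pow_lt P.2.2)
    (fun P => x P.1) fun P P' => by
      simpa only [sub_sub_sub_cancel_right] using hx.map_sub_le_max P.1 P'.1
  have hRX : R.degree < (X ^ n : k[X]).degree := by rwa [degree_X_pow]
  refine ⟨X ^ n + R, (monic_X_pow n).add_of_left hRX,
    by rw [degree_add_eq_left_of_degree_lt hRX, degree_X_pow], fun P hPm hPd => ?_⟩
  have hclose : x (X ^ n + R - P) ≤ x P := by
    simpa [sub_sub_eq_add_sub, add_comm] using hR ⟨P, hPm, hPd⟩
  calc x (X ^ n + R) = x (X ^ n + R - P + P) := by rw [sub_add_cancel]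
    _ ≤ max (x (X ^ n + R - P)) (x P) := hx.isNonarchimedean _ _
    _ = x P := max_eq_right hclose

theorem exists_isMinimalMonic [IsUltrametricDist k] (hk : SphericallyComplete k)
    (hx : IsBerkovichPoint x) (n : ℕ) : ∃ R₀ : k[X], IsMinimalMonic x n R₀ := by
  suffices ∀ m, ∃ Q : ℕ → k[X], ∀ j < m, IsMinimalMonic x j (Q j) from
    let ⟨Q, hQ⟩ := this (n + 1); ⟨Q n, hQ n n.lt_succ_self⟩
  intro m
  induction m with
  | zero => exact ⟨0, fun j hj => absurd hj j.not_lt_zero⟩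
  | succ m ih =>
    obtain ⟨Q, hQ⟩ := ih
    obtain ⟨R₀, hR₀⟩ := hx.exists_isMinimalMonic_of_forall_lt hk hQ
    refine ⟨Function.update Q m R₀, fun j hj => ?_⟩
    rcases Nat.lt_succ_iff_lt_or_eq.1 hj with hj | rfl
    · rw [Function.update_of_ne hj.ne]
      exact hQ j hj
    · rwa [Function.update_self]

end IsBerkovichPoint

/-- Over a spherically complete non-Archimedean valued field `k`,
for every multiplicative non-Archimedean seminorm `x` on `k[T]` extending the
absolute value of `k` and every `d`, there is a monic polynomial
`R₀ = T^(d+1) - P₀` of degree `d+1` with `r = x R₀` such that (a) `r ≤ x R`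
for every monic `R` of degree `d+1`, and (b) `x R = max r (x (R - R₀))` for
every monic `R` of degree `d+1`; so the values of `x` on monic polynomials of
degree `d+1` are determined by `r` and the values of `x` in degree `≤ d`. -/
theorem approx_step
    {k : Type*} [NormedField k] [IsUltrametricDist k]
    (hk : SphericallyComplete k)
    (x : Polynomial k → ℝ≥0)
    (hmul : ∀ P Q : Polynomial k, x (P * Q) = x P * x Q)
    (hultra : ∀ P Q : Polynomial k, x (P + Q) ≤ max (x P) (x Q))
    (hext : ∀ c : k, x (Polynomial.C c) = ‖c‖₊)
    (d : ℕ) :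
    ∃ P₀ : Polynomial k, P₀.degree ≤ d ∧
      (∀ P : Polynomial k, P.degree ≤ d →
        x (X ^ (d + 1) - P₀) ≤ x (X ^ (d + 1) - P)) ∧
      (∀ P : Polynomial k, P.degree ≤ d →
        x (X ^ (d + 1) - P) =
          max (x (X ^ (d + 1) - P₀))
            (x ((X ^ (d + 1) - P) - (X ^ (d + 1) - P₀)))) := by
  have hx : IsBerkovichPoint x := ⟨hmul, hultra, hext⟩
  obtain ⟨R₀, hR₀⟩ := hx.exists_isMinimalMonic hk (d + 1)
  have hd : (d : WithBot ℕ) < ↑(d + 1) := WithBot.coe_lt_coe.2 d.lt_succ_self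
  have hR₀_low : (X ^ (d + 1) - R₀).degree < ↑(d + 1) := by
    rw [← degree_neg, neg_sub]
    exact hR₀.monic.degree_sub_X_pow_lt hR₀.degree_eq
  refine ⟨X ^ (d + 1) - R₀, Order.le_of_lt_succ hR₀_low, fun P hP => ?_, fun P hP => ?_⟩
  · rw [sub_sub_cancel]
    have hPX : P.degree < (X ^ (d + 1) : k[X]).degree := by rw [degree_X_pow]; exact hP.trans_lt hd
    exact hR₀.le _ (monic_X_pow_sub (hP.trans_lt hd))
      (by rw [degree_sub_eq_left_of_degree_lt hPX, degree_X_pow])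
  · have hS : (X ^ (d + 1) - P - R₀).degree < ↑(d + 1) := by
      rw [sub_right_comm]
      exact (degree_sub_le _ _).trans_lt (max_lt hR₀_low (hP.trans_lt hd))
    rw [sub_sub_cancel, ← hR₀.map_add hx hS, add_sub_cancel]
end

section
/- Let k be a non-Archimedean valued field and x a multiplicative seminorm on k[T] extending |·|. Suppose A is monic of degree d+1 with x(A) < x_d(A), where x_d(A) denotes max(r, x(A - R₀)) for R₀ monic of degree d+1 realizing the minimal value r = x(R₀) among monic degree-(d+1) polynomials, and suppose x and x_d agree on polynomials of degree ≤ d. Then x(R₀) < x_d(R₀); in particular, since x(R₀) is minimal, x(A - R₀) computed via x equals that via x_d, and r < x_d(R₀) = x(A - R₀). -/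
open Polynomial NNReal

/-!
Write `A = T^(d+1) - P_A` and `R₀ = T^(d+1) - P₀`. Since `A - R₀ = P₀ - P_A` has degree `≤ d`,
`x` and `y` agree on it, and minimality of `R₀` gives `x (A - R₀) ≤ max (x A) (x R₀) = x A`.
If we had `y R₀ ≤ x R₀`, then `y A ≤ max (y (A - R₀)) (y R₀) ≤ x A`, contradicting `x A < y A`.
-/

theorem apply_neg_eq_of_map_mul {R M : Type*} [Ring R] [MulOneClass M] {f : R → M}
    (hmul : ∀ a b, f (a * b) = f a * f b) (hneg_one : f (-1) = 1) (a : R) : f (-a) = f a := by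
  rw [neg_eq_neg_one_mul, hmul, hneg_one, one_mul]

section Ultrametric

variable {G α : Type*} [AddGroup G] [LinearOrder α]

theorem apply_sub_le_max {f : G → α} (hultra : ∀ a b, f (a + b) ≤ max (f a) (f b))
    (hneg : ∀ a, f (-a) = f a) (a b : G) : f (a - b) ≤ max (f a) (f b) := by
  simpa only [sub_eq_add_neg, hneg] using hultra a (-b)

theorem lt_of_lt_of_apply_sub_eq {x y : G → α}
    (hxultra : ∀ a b, x (a + b) ≤ max (x a) (x b)) (hxneg : ∀ a, x (-a) = x a)
    (hyultra : ∀ a b, y (a + b) ≤ max (y a) (y b)) {a r : G}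
    (hle : x r ≤ x a) (hsub : x (a - r) = y (a - r)) (ha : x a < y a) : x r < y r := by
  by_contra! hr
  have hsub_le : y (a - r) ≤ x a :=
    hsub ▸ (apply_sub_le_max hxultra hxneg a r).trans (max_le le_rfl hle)
  have : y a ≤ x a := calc
    y a = y (a - r + r) := by rw [sub_add_cancel]
    _ ≤ max (y (a - r)) (y r) := hyultra _ _
    _ ≤ x a := max_le hsub_le (hr.trans hle)
  exact ha.not_ge this

end Ultrametric

theorem strict_inequality_step_general
    {k : Type*} [NormedField k]
    (x y : Polynomial k → ℝ≥0)
    (hxmul : ∀ P Q : Polynomial k, x (P * Q) = x P * x Q)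
    (hxultra : ∀ P Q : Polynomial k, x (P + Q) ≤ max (x P) (x Q))
    (hxext : ∀ c : k, x (Polynomial.C c) = ‖c‖₊)
    (hyultra : ∀ P Q : Polynomial k, y (P + Q) ≤ max (y P) (y Q))
    (d : ℕ)
    (hagree : ∀ P : Polynomial k, P.degree ≤ d → x P = y P)
    (P₀ : Polynomial k) (hP₀ : P₀.degree ≤ d)
    (hmin : ∀ P : Polynomial k, P.degree ≤ d →
      x (X ^ (d + 1) - P₀) ≤ x (X ^ (d + 1) - P))
    (PA : Polynomial k) (hPA : PA.degree ≤ d)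
    (hA : x (X ^ (d + 1) - PA) < y (X ^ (d + 1) - PA)) :
    x (X ^ (d + 1) - P₀) < y (X ^ (d + 1) - P₀) ∧
      x ((X ^ (d + 1) - PA) - (X ^ (d + 1) - P₀)) =
        y ((X ^ (d + 1) - PA) - (X ^ (d + 1) - P₀)) := by
  have hdiff : (X ^ (d + 1) - PA) - (X ^ (d + 1) - P₀) = P₀ - PA :=
    sub_sub_sub_cancel_left _ _ _
  have hsub : x ((X ^ (d + 1) - PA) - (X ^ (d + 1) - P₀)) =
      y ((X ^ (d + 1) - PA) - (X ^ (d + 1) - P₀)) :=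
    hdiff ▸ hagree _ ((degree_sub_le _ _).trans (max_le hP₀ hPA))
  have hxneg : ∀ P, x (-P) = x P :=
    apply_neg_eq_of_map_mul hxmul (by simpa using hxext (-1))
  exact ⟨lt_of_lt_of_apply_sub_eq hxultra hxneg hyultra (hmin _ hPA) hsub hA, hsub⟩

/-- Let `x` and `x_d = y` be multiplicative non-Archimedean
seminorms on `k[T]` extending the absolute value of `k` that agree on
polynomials of degree `≤ d`. Let `R₀ = T^(d+1) - P₀` be monic of degree `d+1`
realizing the minimal value `r = x R₀` of `x` among monic polynomials of
degree `d+1`. If `A = T^(d+1) - P_A` is monic of degree `d+1` with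
`x A < y A`, then `x R₀ < y R₀`; in particular, `x (A - R₀) = y (A - R₀)`
(both seminorms agreeing in degree `≤ d`) and `r < y R₀`. -/
theorem strict_inequality_step
    {k : Type*} [NormedField k] [IsUltrametricDist k]
    (x y : Polynomial k → ℝ≥0)
    (hxmul : ∀ P Q : Polynomial k, x (P * Q) = x P * x Q)
    (hxultra : ∀ P Q : Polynomial k, x (P + Q) ≤ max (x P) (x Q))
    (hxext : ∀ c : k, x (Polynomial.C c) = ‖c‖₊)
    (hymul : ∀ P Q : Polynomial k, y (P * Q) = y P * y Q)
    (hyultra : ∀ P Q : Polynomial k, y (P + Q) ≤ max (y P) (y Q))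
    (hyext : ∀ c : k, y (Polynomial.C c) = ‖c‖₊)
    (d : ℕ)
    (hagree : ∀ P : Polynomial k, P.degree ≤ d → x P = y P)
    (P₀ : Polynomial k) (hP₀ : P₀.degree ≤ d)
    (hmin : ∀ P : Polynomial k, P.degree ≤ d →
      x (X ^ (d + 1) - P₀) ≤ x (X ^ (d + 1) - P))
    (PA : Polynomial k) (hPA : PA.degree ≤ d)
    (hA : x (X ^ (d + 1) - PA) < y (X ^ (d + 1) - PA)) :
    x (X ^ (d + 1) - P₀) < y (X ^ (d + 1) - P₀) ∧
      x ((X ^ (d + 1) - PA) - (X ^ (d + 1) - P₀)) =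
        y ((X ^ (d + 1) - PA) - (X ^ (d + 1) - P₀)) :=
  strict_inequality_step_general x y hxmul hxultra hxext hyultra d hagree P₀ hP₀ hmin PA hPA hA
end
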